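/- For even n ≥ 6, consider the 3×(n−1) matrix C with entries: C(1,i) = 4n+3+(i−1)/2 for odd i, C(1,i) = 9n/2+2+i/2 for even i; C(2,i) = 7n/2+3+(i−1)/2 for odd i, C(2,i) = 3n+3+i/2 for even i; C(3,i) = 3n+3−i. Then row 1 uses exactly the integers in [4n+3, 5n+1], row 2 exactly [3n+4, 4n+2], row 3 exactly [2n+4, 3n+2], and every column sums to 21n/2 + 8. -/
import Mathlib


/-- The 3×(n−1) labeling matrix used for `f_n ∘ O_1`, even `n ≥ 6`. -/
def matC (n : ℤ) : Fin 3 → ℤ → ℤ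
  | 0, i => if Odd i then 4 * n + 3 + (i - 1) / 2 else 9 * n / 2 + 2 + i / 2
  | 1, i => if Odd i then 7 * n / 2 + 3 + (i - 1) / 2 else 3 * n + 3 + i / 2
  | 2, i => 3 * n + 3 - i

/-- For even `n ≥ 6`, row 1 of `matC n` (columns `1 ≤ i ≤ n−1`) uses exactly
the integers in `[4n+3, 5n+1]`, row 2 exactly `[3n+4, 4n+2]`, row 3 exactly
`[2n+4, 3n+2]`, and every column sums to `21n/2 + 8`. -/
theorem stmt_10 (n : ℤ) (hn : 6 ≤ n) (heven : Even n) :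
    Set.BijOn (matC n 0) (Set.Icc 1 (n - 1)) (Set.Icc (4 * n + 3) (5 * n + 1)) ∧
    Set.BijOn (matC n 1) (Set.Icc 1 (n - 1)) (Set.Icc (3 * n + 4) (4 * n + 2)) ∧
    Set.BijOn (matC n 2) (Set.Icc 1 (n - 1)) (Set.Icc (2 * n + 4) (3 * n + 2)) ∧
    ∀ i ∈ Set.Icc 1 (n - 1), matC n 0 i + matC n 1 i + matC n 2 i
      = 21 * n / 2 + 8 := by
  have h2 : n % 2 = 0 := Int.even_iff.mp heven
  refine ⟨⟨?_, ?_, ?_⟩, ⟨?_, ?_, ?_⟩, ⟨?_, ?_, ?_⟩, ?_⟩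
  · -- MapsTo row 0
    intro i hi
    simp only [Set.mem_Icc] at hi ⊢
    simp only [matC, Int.odd_iff]
    split_ifs with h <;> omega
  · -- InjOn row 0
    intro a ha b hb hab
    simp only [Set.mem_Icc] at ha hb
    simp only [matC, Int.odd_iff] at hab
    split_ifs at hab <;> omega
  · -- SurjOn row 0
    intro y hy
    simp only [Set.mem_Icc] at hy
    by_cases hle : y ≤ 9 * n / 2 + 2
    · refine ⟨2 * y - 8 * n - 5, ?_, ?_⟩
      · simp only [Set.mem_Icc]; omega
      · simp only [matC, Int.odd_iff]
        rw [if_pos (by omega)]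
        omega
    · refine ⟨2 * y - 9 * n - 4, ?_, ?_⟩
      · simp only [Set.mem_Icc]; omega
      · simp only [matC, Int.odd_iff]
        rw [if_neg (by omega)]
        omega
  · -- MapsTo row 1
    intro i hi
    simp only [Set.mem_Icc] at hi ⊢
    simp only [matC, Int.odd_iff]
    split_ifs with h <;> omega
  · -- InjOn row 1
    intro a ha b hb hab
    simp only [Set.mem_Icc] at ha hb
    simp only [matC, Int.odd_iff] at hab
    split_ifs at hab <;> omega
  · -- SurjOn row 1
    intro y hy
    simp only [Set.mem_Icc] at hy
    by_cases hle : y ≤ 7 * n / 2 + 2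
    · refine ⟨2 * y - 6 * n - 6, ?_, ?_⟩
      · simp only [Set.mem_Icc]; omega
      · simp only [matC, Int.odd_iff]
        rw [if_neg (by omega)]
        omega
    · refine ⟨2 * y - 7 * n - 5, ?_, ?_⟩
      · simp only [Set.mem_Icc]; omega
      · simp only [matC, Int.odd_iff]
        rw [if_pos (by omega)]
        omega
  · -- MapsTo row 2
    intro i hi
    simp only [Set.mem_Icc] at hi ⊢
    simp only [matC]
    omega
  · -- InjOn row 2
    intro a ha b hb hab
    simp only [matC] at hab
    omega
  · -- SurjOn row 2
    intro y hy
    simp only [Set.mem_Icc] at hy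
    refine ⟨3 * n + 3 - y, ?_, ?_⟩
    · simp only [Set.mem_Icc]; omega
    · simp only [matC]; omega
  · -- column sums
    intro i hi
    simp only [Set.mem_Icc] at hi
    simp only [matC, Int.odd_iff]
    split_ifs with h <;> omega
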